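/- Let n and d be positive integers and let I ⊆ V be a homogeneous radical ideal. Then Υ(I) is a radical ideal of S. -/

import Mathlib

/-!
Common setup, following the paper "On the abundance of minimal border rank symmetric
tensors verifying Comon's conjecture".

* `S = ℂ[α_{i,j} : 1 ≤ i ≤ d, 1 ≤ j ≤ n]` is modeled as `MvPolynomial (Fin d × Fin n) ℂ`,
  with the `ℤ^d`-grading in which `deg α_{i,j} = e_i`; `Scomp n d u` is the
  multidegree-`u` component (`u : Fin d → ℕ`).
* `V = ℂ[β_1,…,β_n]` is modeled as `MvPolynomial (Fin n) ℂ` with its standard grading;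
  `Vcomp n N` is the degree-`N` component.
* The graded duals `T` and `P` are modeled by the same polynomial rings, with `S`
  (resp. `V`) acting by differentiation (`apolar`); `ann F` is the apolar
  (annihilator) ideal of `F`.
* A tensor `F ∈ (ℂ^n)^{⊗d}` is an element of the multidegree-`(1,…,1)` component
  `Scomp n d (fun _ => 1)` (a multilinear form in the `x_{i,j}`).
-/

open MvPolynomial Submodule Module

noncomputable section

namespace BorderComon

/-- the multidegree-`u` graded component of `S`. -/
def Scomp (n d : ℕ) (u : Fin d → ℕ) : Submodule ℂ (MvPolynomial (Fin d × Fin n) ℂ) :=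
  weightedHomogeneousSubmodule ℂ (fun p : Fin d × Fin n => Pi.single p.1 1) u

/-- the degree-`N` graded component of `V`. -/
def Vcomp (n : ℕ) (N : ℕ) : Submodule ℂ (MvPolynomial (Fin n) ℂ) :=
  homogeneousSubmodule (Fin n) ℂ N

/-- the diagonal ring map `π : S → V`, `α_{i,j} ↦ β_j`. -/
def piAlg (n d : ℕ) : MvPolynomial (Fin d × Fin n) ℂ →ₐ[ℂ] MvPolynomial (Fin n) ℂ :=
  aeval (fun p : Fin d × Fin n => X p.2)

/-- `π` as a `ℂ`-linear map. -/
def piL (n d : ℕ) : MvPolynomial (Fin d × Fin n) ℂ →ₗ[ℂ] MvPolynomial (Fin n) ℂ :=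
  (piAlg n d).toLinearMap

/-- the ring map `ρ : S → V`, `α_{1,j} ↦ β_j` and `α_{i,j} ↦ 0` for `i ≥ 2`
(rows are `0`-indexed, so the first row is row `0`). -/
def rho (n d : ℕ) : MvPolynomial (Fin d × Fin n) ℂ →ₐ[ℂ] MvPolynomial (Fin n) ℂ :=
  aeval (fun p : Fin d × Fin n => if (p.1 : ℕ) = 0 then X p.2 else 0)

/-- the result of differentiating `F` by the monomial `X^a`:
`∂^a X^b = (∏_i b_i!/(b_i-a_i)!) X^{b-a}` (and `= 0` unless `a ≤ b`, which is
automatic since the descending factorial vanishes there). -/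
def diffMon {σ : Type*} (a : σ →₀ ℕ) (F : MvPolynomial σ ℂ) : MvPolynomial σ ℂ :=
  ∑ b ∈ F.support, (F.coeff b * ∏ i ∈ a.support, ((b i).descFactorial (a i) : ℂ)) •
    monomial (b - a) (1 : ℂ)

/-- the apolarity action: `apolar F ψ = ψ ∘ F` is the result of letting `ψ` act on `F`
by differentiation, linearly in `ψ`. -/
def apolar {σ : Type*} (F : MvPolynomial σ ℂ) : MvPolynomial σ ℂ →ₗ[ℂ] MvPolynomial σ ℂ :=
  Finsupp.lsum ℂ (fun a : σ →₀ ℕ => LinearMap.toSpanSingleton ℂ _ (diffMon a F)) ∘ₗ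
    (AddMonoidAlgebra.coeffLinearEquiv ℂ : MvPolynomial σ ℂ ≃ₗ[ℂ] _).toLinearMap

/-- the apolar (annihilator) ideal `Ann(F) = {ψ : ψ ∘ F = 0}`, as a subspace. -/
def ann {σ : Type*} (F : MvPolynomial σ ℂ) : Submodule ℂ (MvPolynomial σ ℂ) :=
  LinearMap.ker (apolar F)

/-- the ideal `I_R ⊆ S` generated by the `2×2` minors
`α_{i,j} α_{k,ℓ} − α_{i,ℓ} α_{k,j}`, `i < k`, `j < ℓ`. -/
def IR (n d : ℕ) : Ideal (MvPolynomial (Fin d × Fin n) ℂ) :=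
  Ideal.span {q | ∃ i k : Fin d, ∃ j l : Fin n, i < k ∧ j < l ∧
    q = X (i, j) * X (k, l) - X (i, l) * X (k, j)}

/-- `J ⊆ S` is a (multigraded) homogeneous ideal: it is the sum of its
multigraded components. -/
def IsHomogS (n d : ℕ) (J : Ideal (MvPolynomial (Fin d × Fin n) ℂ)) : Prop :=
  Submodule.restrictScalars ℂ J = ⨆ u : Fin d → ℕ, (Submodule.restrictScalars ℂ J ⊓ Scomp n d u)

/-- `I ⊆ V` is a homogeneous ideal: it is the sum of its graded components. -/
def IsHomogV (n : ℕ) (I : Ideal (MvPolynomial (Fin n) ℂ)) : Prop :=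
  Submodule.restrictScalars ℂ I = ⨆ N : ℕ, (Submodule.restrictScalars ℂ I ⊓ Vcomp n N)

/-- the exponent redistribution underlying `ψ_u`: in the sorted list
`i_1 ≤ ⋯ ≤ i_N` of the indices of the monomial `β^γ` (value `j` occurring `γ j`
times, `N = |γ|`), row `i` receives the block of positions
`[∑_{i'<i} u i', ∑_{i'≤i} u i')`, while value `j` occupies positions
`[∑_{j'<j} γ j', ∑_{j'≤j} γ j')`; hence the exponent of `α_{i,j}` is the size of
the intersection of these two intervals. -/
def distrib (n d : ℕ) (u : Fin d → ℕ) (γ : Fin n →₀ ℕ) : (Fin d × Fin n) →₀ ℕ :=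
  Finsupp.equivFunOnFinite.symm fun p : Fin d × Fin n =>
    min (∑ i ∈ Finset.univ.filter fun i : Fin d => (i : ℕ) ≤ (p.1 : ℕ), u i)
        (∑ j ∈ Finset.univ.filter fun j : Fin n => (j : ℕ) ≤ (p.2 : ℕ), γ j)
    - max (∑ i ∈ Finset.univ.filter fun i : Fin d => (i : ℕ) < (p.1 : ℕ), u i)
          (∑ j ∈ Finset.univ.filter fun j : Fin n => (j : ℕ) < (p.2 : ℕ), γ j)

/-- the linear map `ψ_u : V → S` sending a monomial `β_{i_1} β_{i_2} ⋯ β_{i_N}`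
with `i_1 ≤ i_2 ≤ ⋯ ≤ i_N` to
`(α_{1,i_1} ⋯ α_{1,i_{u_1}}) (α_{2,i_{u_1+1}} ⋯ α_{2,i_{u_1+u_2}}) ⋯`.
(Its restriction to `Vcomp n (∑ i, u i)` is the map `ψ_u : V_{|u|} → S_u` of the
paper.) -/
def psi (n d : ℕ) (u : Fin d → ℕ) :
    MvPolynomial (Fin n) ℂ →ₗ[ℂ] MvPolynomial (Fin d × Fin n) ℂ :=
  (AddMonoidAlgebra.coeffLinearEquiv ℂ :
      MvPolynomial (Fin d × Fin n) ℂ ≃ₗ[ℂ] _).symm.toLinearMap ∘ₗ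
    Finsupp.lmapDomain ℂ ℂ (distrib n d u) ∘ₗ
    (AddMonoidAlgebra.coeffLinearEquiv ℂ : MvPolynomial (Fin n) ℂ ≃ₗ[ℂ] _).toLinearMap

/-- `Υ(I) = I_R + ∑_{u} ψ_u(I_{|u|}) ⊆ S`. -/
def Upsilon (n d : ℕ) (I : Ideal (MvPolynomial (Fin n) ℂ)) :
    Submodule ℂ (MvPolynomial (Fin d × Fin n) ℂ) :=
  restrictScalars ℂ (IR n d) ⊔
    ⨆ u : Fin d → ℕ, Submodule.map (psi n d u) (restrictScalars ℂ I ⊓ Vcomp n (∑ i, u i))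

/-- the irrelevant ideal `B_X = ∏_{i=1}^d (α_{i,1},…,α_{i,n}) ⊆ S`. -/
def BX (n d : ℕ) : Ideal (MvPolynomial (Fin d × Fin n) ℂ) :=
  ∏ i : Fin d, Ideal.span (Set.range fun j : Fin n => X (i, j))

/-- the irrelevant ideal `B_Y = (β_1,…,β_n) ⊆ V`. -/
def BY (n : ℕ) : Ideal (MvPolynomial (Fin n) ℂ) :=
  Ideal.span (Set.range X)

/-- `Σ(J) = ⊕_{a ≥ 0} ⊕_{s ∈ ℰ} π(J_{a𝟏+s}) ⊆ V`, where
`ℰ = {0, e_1, e_1+e_2, …, e_1+⋯+e_{d-1}}` (the element `s` with `m` ones is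
`fun i => if i < m then 1 else 0`). -/
def SigmaMap (n d : ℕ) (J : Ideal (MvPolynomial (Fin d × Fin n) ℂ)) :
    Submodule ℂ (MvPolynomial (Fin n) ℂ) :=
  ⨆ a : ℕ, ⨆ m : Fin d, Submodule.map (piL n d)
    (restrictScalars ℂ J ⊓ Scomp n d (fun i => a + if (i : ℕ) < (m : ℕ) then 1 else 0))

/-- the set of tensors of rank at most `r`: sums of `r` decomposable tensors
`v_1 ⊗ ⋯ ⊗ v_d = ∏_i (∑_j v_i(j) x_{i,j})`. -/
def rankLE (n d r : ℕ) : Set (MvPolynomial (Fin d × Fin n) ℂ) :=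
  {F | ∃ v : Fin r → Fin d → Fin n → ℂ,
    F = ∑ s : Fin r, ∏ i : Fin d, ∑ j : Fin n, C (v s i j) * X (i, j)}

/-- `F` has border rank at most `r`: coefficientwise (finitely many coefficients are
involved), `F` lies in the closure of the set of tensors of rank at most `r`. -/
def brkLE (n d : ℕ) (F : MvPolynomial (Fin d × Fin n) ℂ) (r : ℕ) : Prop :=
  (fun m => coeff m F) ∈ closure ((fun G => fun m => coeff m G) '' rankLE n d r)

/-- the border rank of a tensor. -/
def brk (n d : ℕ) (F : MvPolynomial (Fin d × Fin n) ℂ) : ℕ :=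
  sInf {r | brkLE n d F r}

/-- polynomials that are sums of `r` `d`-th powers of linear forms. -/
def srankLE (n d r : ℕ) : Set (MvPolynomial (Fin n) ℂ) :=
  {p | ∃ c : Fin r → Fin n → ℂ, p = ∑ s : Fin r, (∑ j : Fin n, C (c s j) * X j) ^ d}

/-- `p` has symmetric border rank at most `r`. -/
def sbrkLE (n d : ℕ) (p : MvPolynomial (Fin n) ℂ) (r : ℕ) : Prop :=
  (fun m => coeff m p) ∈ closure ((fun q => fun m => coeff m q) '' srankLE n d r)

/-- the symmetric border rank of a degree-`d` form. -/
def sbrk (n d : ℕ) (p : MvPolynomial (Fin n) ℂ) : ℕ :=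
  sInf {r | sbrkLE n d p r}

/-- `F` is a symmetric tensor: invariant under the permutations of the `d` factors. -/
def IsSymm (n d : ℕ) (F : MvPolynomial (Fin d × Fin n) ℂ) : Prop :=
  ∀ τ : Equiv.Perm (Fin d), rename (Prod.map τ id) F = F

/-- the degree-`d` polynomial `p_F` corresponding to a symmetric tensor `F`, obtained
by identifying all the rows of variables (`x_{i,j} ↦ y_j`); `F` is the polarization
of `p_F`. -/
def pF (n d : ℕ) (F : MvPolynomial (Fin d × Fin n) ℂ) : MvPolynomial (Fin n) ℂ :=
  rename Prod.snd F

/-- `F` is concise: the contraction `(ℂ^n)^* → (ℂ^n)^{⊗(d-1)}` of the first tensor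
factor, `w ↦ F(x_{1,j} := w_j)`, is injective. -/
def Concise (n d : ℕ) (F : MvPolynomial (Fin d × Fin n) ℂ) : Prop :=
  Function.Injective fun w : Fin n → ℂ =>
    aeval (fun p : Fin d × Fin n => if (p.1 : ℕ) = 0 then C (w p.2) else X p) F

/-- the ideal `∑_{0<u<𝟏} S·Ann(F)_u` generated by the components `Ann(F)_u`,
`0 < u < 𝟏` (componentwise). -/
def midIdeal (n d : ℕ) (F : MvPolynomial (Fin d × Fin n) ℂ) :
    Ideal (MvPolynomial (Fin d × Fin n) ℂ) :=
  Ideal.span (⋃ u ∈ {u : Fin d → ℕ | 0 < u ∧ u < fun _ => 1},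
    ((ann F ⊓ Scomp n d u : Submodule ℂ (MvPolynomial (Fin d × Fin n) ℂ)) :
      Set (MvPolynomial (Fin d × Fin n) ℂ)))

/-- `F` is a *sharp* tensor:
(1) `Ann(F)` has exactly `n-1` minimal generators of multidegree `𝟏`;
(2) `dim (S/Ann F)_u = n` for all `0 < u < 𝟏`;
(3) `dim (S/(Ann(F)_{e_i+e_j}))_{s e_i + e_j} = n` for all `i ≠ j`, `1 ≤ s ≤ d-1`. -/
def Sharp (n d : ℕ) (F : MvPolynomial (Fin d × Fin n) ℂ) : Prop :=
  (finrank ℂ (ann F ⊓ Scomp n d fun _ => 1 :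
        Submodule ℂ (MvPolynomial (Fin d × Fin n) ℂ)) -
      finrank ℂ (restrictScalars ℂ (midIdeal n d F) ⊓ Scomp n d fun _ => 1 :
        Submodule ℂ (MvPolynomial (Fin d × Fin n) ℂ)) = n - 1) ∧
  (∀ u : Fin d → ℕ, 0 < u → u < (fun _ => 1) →
    finrank ℂ (Scomp n d u ⧸ Submodule.comap (Scomp n d u).subtype (ann F)) = n) ∧
  (∀ i j : Fin d, i ≠ j → ∀ s : ℕ, 1 ≤ s → s ≤ d - 1 →
    finrank ℂ (Scomp n d (Pi.single i s + Pi.single j 1) ⧸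
      Submodule.comap (Scomp n d (Pi.single i s + Pi.single j 1)).subtype
        (restrictScalars ℂ (Ideal.span
          ((ann F ⊓ Scomp n d (Pi.single i 1 + Pi.single j 1) :
            Submodule ℂ (MvPolynomial (Fin d × Fin n) ℂ)) :
            Set (MvPolynomial (Fin d × Fin n) ℂ))))) = n)

/-!
Let `Φ : S → (V/I)[x_1,…,x_d]` be the Segre map `α_{i,j} ↦ x_i β̄_j` followed by reduction
modulo `I`. It kills the `2×2` minors and sends `ψ_u(p)` to `x^u p̄` for `p ∈ V_{|u|}`, so
`Υ(I) ⊆ ker Φ`. Conversely, exchanging the second indices of an inversion `α_{i,j} α_{k,l}`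
(`i < k`, `l < j`) changes a monomial only modulo `I_R` and strictly decreases
`∑ i (n - j)` over its factors; it ends at the unique inversion-free monomial with the same row
and column contents, which is `ψ` of a monomial of `V`. Hence modulo `I_R` every `x ∈ S` is
`∑_u ψ_u(p_u)` with `Φ(x) = ∑_u x^u p̄_u`, and `Φ(x) = 0` forces every `p_u ∈ I`. Thus
`Υ(I) = ker Φ`, which is radical because `(V/I)[x_1,…,x_d]` is reduced.
-/

section CumulativeSums

variable {d : ℕ}

def cumSum (u : Fin d → ℕ) (m : ℕ) : ℕ :=
  ∑ x ∈ Finset.range m, if h : x < d then u ⟨x, h⟩ else 0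

lemma cumSum_succ (u : Fin d → ℕ) (m : ℕ) :
    cumSum u (m + 1) = cumSum u m + if h : m < d then u ⟨m, h⟩ else 0 :=
  Finset.sum_range_succ _ _

lemma cumSum_succ_val (u : Fin d → ℕ) (i : Fin d) : cumSum u (i + 1) = cumSum u i + u i := by
  simp [cumSum_succ, i.isLt]

lemma cumSum_mono (u : Fin d → ℕ) : Monotone (cumSum u) :=
  monotone_nat_of_le_succ fun m => by rw [cumSum_succ]; omega

lemma sum_filter_lt_eq_cumSum (u : Fin d → ℕ) {m : ℕ} (hm : m ≤ d) :
    ∑ i ∈ Finset.univ.filter (fun i : Fin d => (i : ℕ) < m), u i = cumSum u m := by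
  have hrange : (Finset.range d).filter (· < m) = Finset.range m := by
    ext x; simp only [Finset.mem_filter, Finset.mem_range]; omega
  rw [cumSum, ← hrange, Finset.sum_filter, Finset.sum_filter,
    ← Fin.sum_univ_eq_sum_range (fun x => if x < m then (if h : x < d then u ⟨x, h⟩ else 0) else 0)]
  simp

lemma cumSum_top (u : Fin d → ℕ) : cumSum u d = ∑ i, u i := by
  rw [← sum_filter_lt_eq_cumSum u le_rfl]
  simp

end CumulativeSums

lemma distrib_apply (n d : ℕ) (u : Fin d → ℕ) (γ : Fin n →₀ ℕ) (i : Fin d) (j : Fin n) :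
    distrib n d u γ (i, j) =
      min (cumSum u (i + 1)) (cumSum γ (j + 1)) - max (cumSum u i) (cumSum γ j) := by
  have hle : ∀ {m : ℕ} (t : Fin m) (v : Fin m → ℕ),
      ∑ k ∈ Finset.univ.filter (fun k : Fin m => (k : ℕ) ≤ t), v k = cumSum v (t + 1) := by
    intro m t v
    simp only [← sum_filter_lt_eq_cumSum v t.isLt, Nat.lt_succ_iff]
  simp only [distrib, Finsupp.coe_equivFunOnFinite_symm, hle,
    sum_filter_lt_eq_cumSum _ i.isLt.le, sum_filter_lt_eq_cumSum _ j.isLt.le]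

-- the `k`-th summand is the length of `[A, A') ∩ [g k, g (k + 1))`
lemma sum_range_min_sub_max {g : ℕ → ℕ} (hg : Monotone g) (hg0 : g 0 = 0) {A A' : ℕ}
    (hA : A ≤ A') (m : ℕ) :
    ∑ k ∈ Finset.range m, (min A' (g (k + 1)) - max A (g k)) = min A' (max A (g m)) - A := by
  induction m with
  | zero => simp only [Finset.sum_range_zero, hg0]; omega
  | succ m ih =>
    have : g m ≤ g (m + 1) := hg (by omega)
    rw [Finset.sum_range_succ, ih]
    omega

section Margins

variable {n d : ℕ}

def rowMargin (b : Fin d × Fin n →₀ ℕ) : Fin d →₀ ℕ := b.mapDomain Prod.fst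

def colMargin (b : Fin d × Fin n →₀ ℕ) : Fin n →₀ ℕ := b.mapDomain Prod.snd

lemma rowMargin_apply (b : Fin d × Fin n →₀ ℕ) (i : Fin d) :
    rowMargin b i = ∑ j, b (i, j) := by
  simp [rowMargin, Finsupp.mapDomain, Finsupp.sum_fintype, Fintype.sum_prod_type,
    Finsupp.single_apply]

lemma colMargin_apply (b : Fin d × Fin n →₀ ℕ) (j : Fin n) :
    colMargin b j = ∑ i, b (i, j) := by
  simp [colMargin, Finsupp.mapDomain, Finsupp.sum_fintype, Fintype.sum_prod_type_right,
    Finsupp.single_apply]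

variable {u : Fin d → ℕ} {γ : Fin n →₀ ℕ}

lemma rowMargin_distrib (hγ : γ.degree = ∑ i, u i) : ⇑(rowMargin (distrib n d u γ)) = u := by
  ext i
  have htot : cumSum u (i + 1) ≤ cumSum γ n := by
    rw [cumSum_top, ← Finsupp.degree_eq_sum, hγ, ← cumSum_top]; exact cumSum_mono u i.isLt
  have := cumSum_succ_val u i
  simp only [rowMargin_apply, distrib_apply]
  rw [Fin.sum_univ_eq_sum_range
      (fun k => min (cumSum u (i + 1)) (cumSum γ (k + 1)) - max (cumSum u i) (cumSum γ k)),
    sum_range_min_sub_max (cumSum_mono γ) rfl (cumSum_mono u (by omega : (i : ℕ) ≤ i + 1))]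
  omega

lemma colMargin_distrib (hγ : γ.degree = ∑ i, u i) : colMargin (distrib n d u γ) = γ := by
  ext j
  have htot : cumSum γ (j + 1) ≤ cumSum u d := by
    rw [cumSum_top, ← hγ, Finsupp.degree_eq_sum, ← cumSum_top]; exact cumSum_mono γ j.isLt
  have := cumSum_succ_val γ j
  simp only [colMargin_apply, distrib_apply, min_comm (cumSum u _), max_comm (cumSum u _)]
  rw [Fin.sum_univ_eq_sum_range
      (fun k => min (cumSum γ (j + 1)) (cumSum u (k + 1)) - max (cumSum γ j) (cumSum u k)),
    sum_range_min_sub_max (cumSum_mono u) rfl (cumSum_mono γ (by omega : (j : ℕ) ≤ j + 1))]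
  omega

end Margins

section InversionFree

variable {n d : ℕ}

def extendByZero (b : Fin d × Fin n →₀ ℕ) (x y : ℕ) : ℕ :=
  if h : x < d ∧ y < n then b (⟨x, h.1⟩, ⟨y, h.2⟩) else 0

def cornerSum (b : Fin d × Fin n →₀ ℕ) (m t : ℕ) : ℕ :=
  ∑ x ∈ Finset.range m, ∑ y ∈ Finset.range t, extendByZero b x y

lemma cornerSum_allCols (b : Fin d × Fin n →₀ ℕ) (m : ℕ) :
    cornerSum b m n = cumSum (rowMargin b) m := by
  refine Finset.sum_congr rfl fun x _ => ?_
  split_ifs with hx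
  · rw [rowMargin_apply, ← Fin.sum_univ_eq_sum_range (extendByZero b x)]
    simp [extendByZero, hx]
  · simp [extendByZero, hx]

lemma cornerSum_allRows (b : Fin d × Fin n →₀ ℕ) (t : ℕ) :
    cornerSum b d t = cumSum (colMargin b) t := by
  rw [cornerSum, Finset.sum_comm]
  refine Finset.sum_congr rfl fun y _ => ?_
  split_ifs with hy
  · rw [colMargin_apply, ← Fin.sum_univ_eq_sum_range (extendByZero b · y)]
    simp [extendByZero, hy]
  · simp [extendByZero, hy]

def IsInversionFree (b : Fin d × Fin n →₀ ℕ) : Prop :=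
  ∀ i k : Fin d, ∀ j l : Fin n, i < k → l < j → b (i, j) = 0 ∨ b (k, l) = 0

lemma IsInversionFree.extendByZero_eq_zero_or {b : Fin d × Fin n →₀ ℕ} (hb : IsInversionFree b)
    {x k y l : ℕ} (hxk : x < k) (hly : l < y) :
    extendByZero b x y = 0 ∨ extendByZero b k l = 0 := by
  unfold extendByZero
  split_ifs with h1 h2 h2
  · exact hb _ _ _ _ hxk hly
  all_goals simp

lemma IsInversionFree.cornerSum_eq_min {b : Fin d × Fin n →₀ ℕ} (hb : IsInversionFree b)
    {m t : ℕ} (hm : m ≤ d) (ht : t ≤ n) :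
    cornerSum b m t = min (cornerSum b m n) (cornerSum b d t) := by
  have hright : cornerSum b m n = cornerSum b m t +
      ∑ x ∈ Finset.range m, ∑ y ∈ Finset.Ico t n, extendByZero b x y := by
    simp only [cornerSum, ← Finset.sum_add_distrib, Finset.sum_range_add_sum_Ico _ ht]
  have hbottom : cornerSum b d t = cornerSum b m t +
      ∑ x ∈ Finset.Ico m d, ∑ y ∈ Finset.range t, extendByZero b x y := by
    simp only [cornerSum, Finset.sum_range_add_sum_Ico _ hm]
  -- two nonzero entries, one in each of these blocks, would form an inversion
  have : ∑ x ∈ Finset.range m, ∑ y ∈ Finset.Ico t n, extendByZero b x y = 0 ∨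
      ∑ x ∈ Finset.Ico m d, ∑ y ∈ Finset.range t, extendByZero b x y = 0 := by
    by_contra! h
    obtain ⟨x, hx, hx'⟩ := Finset.exists_ne_zero_of_sum_ne_zero h.1
    obtain ⟨y, hy, hxy⟩ := Finset.exists_ne_zero_of_sum_ne_zero hx'
    obtain ⟨k, hk, hk'⟩ := Finset.exists_ne_zero_of_sum_ne_zero h.2
    obtain ⟨l, hl, hkl⟩ := Finset.exists_ne_zero_of_sum_ne_zero hk'
    simp only [Finset.mem_range, Finset.mem_Ico] at hx hy hk hl
    exact (hb.extendByZero_eq_zero_or (by omega) (by omega)).elim hxy hkl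
  omega

lemma IsInversionFree.eq_distrib {b : Fin d × Fin n →₀ ℕ} (hb : IsInversionFree b) :
    b = distrib n d (rowMargin b) (colMargin b) := by
  ext ⟨i, j⟩
  rw [distrib_apply]
  -- `b (i, j)` is the inclusion–exclusion of the four corner sums at `(i, j)`, each a `min`
  have hbij : b (i, j) = extendByZero b i j := by simp [extendByZero]
  have e1 : cornerSum b (i + 1) (j + 1)
      = cornerSum b i (j + 1) + ∑ y ∈ Finset.range (j + 1), extendByZero b i y :=
    Finset.sum_range_succ _ _
  have e2 : cornerSum b (i + 1) j = cornerSum b i j + ∑ y ∈ Finset.range j, extendByZero b i y :=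
    Finset.sum_range_succ _ _
  have e3 := Finset.sum_range_succ (extendByZero b i) j
  have m1 := hb.cornerSum_eq_min (m := i + 1) (t := j + 1) i.isLt j.isLt
  have m2 := hb.cornerSum_eq_min (t := j + 1) i.isLt.le j.isLt
  have m3 := hb.cornerSum_eq_min (m := i + 1) i.isLt j.isLt.le
  have m4 := hb.cornerSum_eq_min i.isLt.le j.isLt.le
  simp only [cornerSum_allCols, cornerSum_allRows] at m1 m2 m3 m4
  have := cumSum_mono (rowMargin b) (by omega : (i : ℕ) ≤ i + 1)
  have := cumSum_mono (colMargin b) (by omega : (j : ℕ) ≤ j + 1)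
  omega

end InversionFree

section Straightening

variable {n d : ℕ}

def inversionWeight : (Fin d × Fin n →₀ ℕ) →ₗ[ℕ] ℕ :=
  Finsupp.linearCombination ℕ fun p => (p.1 : ℕ) * (n - p.2)

lemma monomial_swap_mem_IR {i k : Fin d} {j l : Fin n} (hik : i < k) (hlj : l < j)
    (c : Fin d × Fin n →₀ ℕ) :
    monomial (Finsupp.single (i, j) 1 + Finsupp.single (k, l) 1 + c) (1 : ℂ)
      - monomial (Finsupp.single (i, l) 1 + Finsupp.single (k, j) 1 + c) 1 ∈ IR n d := by
  have hminor : (X (i, l) * X (k, j) - X (i, j) * X (k, l) :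
      MvPolynomial (Fin d × Fin n) ℂ) ∈ IR n d :=
    Ideal.subset_span ⟨i, k, l, j, hik, hlj, rfl⟩
  convert Ideal.mul_mem_left _ (-monomial c 1) hminor using 1
  simp only [add_assoc, monomial_single_add, pow_one]
  ring

lemma exists_swap_of_not_isInversionFree {b : Fin d × Fin n →₀ ℕ} (hb : ¬IsInversionFree b) :
    ∃ b', monomial b (1 : ℂ) - monomial b' 1 ∈ IR n d ∧ rowMargin b' = rowMargin b ∧
      colMargin b' = colMargin b ∧ inversionWeight b' < inversionWeight b := by
  simp only [IsInversionFree, not_forall, not_or] at hb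
  obtain ⟨i, k, j, l, hik, hlj, hij, hkl⟩ := hb
  have hne : (i, j) ≠ (k, l) := fun h => hik.ne (congrArg Prod.fst h)
  have hle : Finsupp.single (i, j) 1 + Finsupp.single (k, l) 1 ≤ b := by
    intro p
    simp only [Finsupp.add_apply, Finsupp.single_apply]
    split_ifs <;> simp_all <;> omega
  obtain ⟨c, rfl⟩ := exists_add_of_le hle
  refine ⟨Finsupp.single (i, l) 1 + Finsupp.single (k, j) 1 + c, monomial_swap_mem_IR hik hlj c,
    ?_, ?_, ?_⟩
  · simp only [rowMargin, Finsupp.mapDomain_add, Finsupp.mapDomain_single]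
  · simp only [colMargin, Finsupp.mapDomain_add, Finsupp.mapDomain_single]
    abel
  · simp only [inversionWeight, map_add, Finsupp.linearCombination_single, one_smul]
    have := mul_add_mul_lt_mul_add_mul (a := (i : ℕ)) (b := k) (c := n - j) (d := n - l)
      hik (by omega)
    omega

lemma psi_monomial (u : Fin d → ℕ) (γ : Fin n →₀ ℕ) (c : ℂ) :
    psi n d u (monomial γ c) = monomial (distrib n d u γ) c :=
  AddMonoidAlgebra.mapDomainLinearMap_single _ _ _

lemma monomial_sub_distrib_mem_IR (b : Fin d × Fin n →₀ ℕ) :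
    monomial b (1 : ℂ) - monomial (distrib n d (rowMargin b) (colMargin b)) 1 ∈ IR n d := by
  induction hw : inversionWeight b using Nat.strong_induction_on generalizing b with
  | _ w ih =>
  by_cases hb : IsInversionFree b
  · rw [← hb.eq_distrib, sub_self]
    exact zero_mem _
  · obtain ⟨b', hbb', hrow, hcol, hlt⟩ := exists_swap_of_not_isInversionFree hb
    have hb' := ih _ (hw ▸ hlt) b' rfl
    rw [hrow, hcol] at hb'
    simpa using add_mem hbb' hb'

lemma monomial_sub_psi_mem_IR (b : Fin d × Fin n →₀ ℕ) (c : ℂ) :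
    monomial b c - psi n d (rowMargin b) (monomial (colMargin b) c) ∈ IR n d := by
  rw [psi_monomial, ← mul_one c, ← smul_eq_mul, ← smul_monomial, ← smul_monomial, ← smul_sub]
  exact Submodule.smul_of_tower_mem _ c (monomial_sub_distrib_mem_IR b)

end Straightening

section SegreMap

variable (n d : ℕ) (I : Ideal (MvPolynomial (Fin n) ℂ))

def segreMap :
    MvPolynomial (Fin d × Fin n) ℂ →ₐ[ℂ] MvPolynomial (Fin d) (MvPolynomial (Fin n) ℂ ⧸ I) :=
  aeval fun p => X p.1 * C (Ideal.Quotient.mk I (X p.2))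

variable {n d I}

lemma segreMap_monomial (b : Fin d × Fin n →₀ ℕ) (c : ℂ) :
    segreMap n d I (monomial b c) =
      monomial (rowMargin b) (Ideal.Quotient.mk I (monomial (colMargin b) c)) := by
  induction b using Finsupp.induction with
  | zero =>
    simp only [segreMap, monomial_zero', algHom_C, MvPolynomial.algebraMap_apply, rowMargin,
      colMargin, Finsupp.mapDomain_zero, C_inj]
    rfl
  | single_add p k b _ _ ih =>
    rw [monomial_single_add, map_mul, ih]
    simp only [rowMargin, colMargin, Finsupp.mapDomain_add, Finsupp.mapDomain_single,
      monomial_single_add]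
    rw [map_pow, segreMap, aeval_X, map_mul, ← C_mul_monomial, map_pow, map_pow]
    ring

end SegreMap

section SegreKernel

variable {n d : ℕ} {I : Ideal (MvPolynomial (Fin n) ℂ)}

lemma IR_le_ker_segreMap : IR n d ≤ RingHom.ker (segreMap n d I) := by
  rw [IR, Ideal.span_le]
  rintro _ ⟨i, k, j, l, -, -, rfl⟩
  simp only [SetLike.mem_coe, RingHom.mem_ker, map_sub, map_mul, segreMap, aeval_X]
  ring

lemma segreMap_psi (v : Fin d →₀ ℕ) {p : MvPolynomial (Fin n) ℂ}
    (hp : p ∈ Vcomp n (∑ i, v i)) :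
    segreMap n d I (psi n d v p) = monomial v (Ideal.Quotient.mk I p) := by
  have hp' := (mem_homogeneousSubmodule _ _).mp hp
  rw [p.as_sum]
  simp only [map_sum]
  refine Finset.sum_congr rfl fun γ hγ => ?_
  have hdeg : γ.degree = ∑ i, v i := by
    rw [Finsupp.degree_eq_weight_one]
    exact hp' (mem_support_iff.mp hγ)
  rw [psi_monomial, segreMap_monomial, colMargin_distrib hdeg,
    DFunLike.coe_injective (rowMargin_distrib hdeg)]

/-- `π` applied to the multidegree-`v` component of `x`. -/
def piComponent (x : MvPolynomial (Fin d × Fin n) ℂ) (v : Fin d →₀ ℕ) : MvPolynomial (Fin n) ℂ :=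
  ∑ b ∈ x.support with rowMargin b = v, monomial (colMargin b) (coeff b x)

lemma piComponent_mem_Vcomp (x : MvPolynomial (Fin d × Fin n) ℂ) (v : Fin d →₀ ℕ) :
    piComponent x v ∈ Vcomp n (∑ i, v i) := by
  refine sum_mem fun b hb => (mem_homogeneousSubmodule _ _).mpr (isHomogeneous_monomial _ ?_)
  rw [← (Finset.mem_filter.mp hb).2, ← Finsupp.degree_eq_sum, rowMargin, colMargin,
    Finsupp.degree_mapDomain, Finsupp.degree_mapDomain]

lemma coeff_segreMap (x : MvPolynomial (Fin d × Fin n) ℂ) (v : Fin d →₀ ℕ) :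
    coeff v (segreMap n d I x) = Ideal.Quotient.mk I (piComponent x v) := by
  conv_lhs => rw [x.as_sum]
  simp only [map_sum, coeff_sum, segreMap_monomial, coeff_monomial, piComponent,
    Finset.sum_filter, apply_ite (Ideal.Quotient.mk I), map_zero]

lemma sub_sum_psi_piComponent_mem_IR (x : MvPolynomial (Fin d × Fin n) ℂ) :
    x - ∑ v ∈ x.support.image rowMargin, psi n d v (piComponent x v) ∈ IR n d := by
  have hsum : ∑ v ∈ x.support.image rowMargin, psi n d v (piComponent x v) =
      ∑ b ∈ x.support, psi n d (rowMargin b) (monomial (colMargin b) (coeff b x)) := by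
    simp only [piComponent, map_sum]
    rw [← Finset.sum_fiberwise_of_maps_to fun b hb => Finset.mem_image_of_mem rowMargin hb]
    refine Finset.sum_congr rfl fun v _ => Finset.sum_congr rfl fun b hb => ?_
    rw [(Finset.mem_filter.mp hb).2]
  have hsub : x - ∑ b ∈ x.support, psi n d (rowMargin b) (monomial (colMargin b) (coeff b x)) =
      ∑ b ∈ x.support, (monomial b (coeff b x) -
        psi n d (rowMargin b) (monomial (colMargin b) (coeff b x))) := by
    rw [Finset.sum_sub_distrib, ← x.as_sum]
  rw [hsum, hsub]
  exact sum_mem fun b _ => monomial_sub_psi_mem_IR b _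

end SegreKernel

lemma upsilon_eq_ker_segreMap {n d : ℕ} (I : Ideal (MvPolynomial (Fin n) ℂ)) :
    Upsilon n d I = (RingHom.ker (segreMap n d I)).restrictScalars ℂ := by
  refine le_antisymm (sup_le (fun _ hx => IR_le_ker_segreMap hx) (iSup_le fun u => ?_)) ?_
  · rintro _ ⟨p, ⟨hpI, hpV⟩, rfl⟩
    obtain ⟨v, rfl⟩ : ∃ v : Fin d →₀ ℕ, ⇑v = u := ⟨_, Finsupp.coe_equivFunOnFinite_symm u⟩
    rw [restrictScalars_mem, RingHom.mem_ker, segreMap_psi v hpV,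
      Ideal.Quotient.eq_zero_iff_mem.mpr hpI, map_zero]
  · intro x hx
    have hcomp : ∀ v, piComponent x v ∈ I := fun v => by
      rw [← Ideal.Quotient.eq_zero_iff_mem, ← coeff_segreMap, RingHom.mem_ker.mp hx, coeff_zero]
    rw [← sub_add_cancel x (∑ v ∈ x.support.image rowMargin, psi n d v (piComponent x v))]
    refine add_mem (mem_sup_left (sub_sum_psi_piComponent_mem_IR x)) (sum_mem fun v _ => ?_)
    exact mem_sup_right <| mem_iSup_of_mem (⇑v) <|
      mem_map_of_mem ⟨hcomp v, piComponent_mem_Vcomp x v⟩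

theorem stmt_6_general (n d : ℕ)
    (I : Ideal (MvPolynomial (Fin n) ℂ))
    (hrad : I.IsRadical) :
    (∀ s x : MvPolynomial (Fin d × Fin n) ℂ,
        x ∈ Upsilon n d I → s * x ∈ Upsilon n d I) ∧
      (∀ (f : MvPolynomial (Fin d × Fin n) ℂ) (k : ℕ), k ≠ 0 →
        f ^ k ∈ Upsilon n d I → f ∈ Upsilon n d I) := by
  have : IsReduced (MvPolynomial (Fin n) ℂ ⧸ I) := (Ideal.isRadical_iff_quotient_reduced I).mp hrad
  simp only [upsilon_eq_ker_segreMap, restrictScalars_mem, RingHom.mem_ker, map_mul, map_pow]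
  exact ⟨fun s x hx => by rw [hx, mul_zero], fun f k _ hf => IsReduced.eq_zero _ ⟨k, hf⟩⟩

/-- Proposition 4.4: if `I ⊆ V` is a homogeneous radical ideal,
then `Υ(I)` is a radical ideal of `S`. -/
theorem stmt_6 (n d : ℕ) (hn : 0 < n) (hd : 0 < d)
    (I : Ideal (MvPolynomial (Fin n) ℂ)) (hhom : IsHomogV n I)
    (hrad : I.IsRadical) :
    (∀ s x : MvPolynomial (Fin d × Fin n) ℂ,
        x ∈ Upsilon n d I → s * x ∈ Upsilon n d I) ∧
      (∀ (f : MvPolynomial (Fin d × Fin n) ℂ) (k : ℕ), k ≠ 0 →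
        f ^ k ∈ Upsilon n d I → f ∈ Upsilon n d I) :=
  stmt_6_general n d I hrad

end BorderComon
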